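/- arXiv:1009.0736 — 3 statements merged into one kernel-verified Lean document; each statement's English description precedes it below -/
import Mathlib

section
/- Let a, b : ℕ → ℝ be sequences with a(n) ≥ 0 and b(n) ≥ 0 for all n ≥ 1, and with a(1) = b(1) = 1. Let λ > 0 be a real number. Suppose that for every real β > 1 the series ∑_{n≥1} a(n)·n^{−β} and ∑_{n≥1} b(n)·n^{−β} both converge, and that ∑_{n≥1} b(n)·n^{−β} = λ^{−β} · ∑_{n≥1} a(n)·n^{−β} for every real β > 1. Then λ = 1. -/
lemma dirichlet_aux_ge_one (c : ℕ → ℝ) (hc : ∀ n : ℕ, 1 ≤ n → 0 ≤ c n) (hc1 : c 1 = 1)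
    (β : ℝ) (hβ : 1 < β) (hs : Summable fun n : ℕ => c n * (n : ℝ) ^ (-β)) :
    1 ≤ ∑' n : ℕ, c n * (n : ℝ) ^ (-β) := by
  have h1 : c 1 * ((1 : ℕ) : ℝ) ^ (-β) = 1 := by simp [hc1]
  calc (1 : ℝ) = c 1 * ((1 : ℕ) : ℝ) ^ (-β) := h1.symm
    _ ≤ ∑' n : ℕ, c n * (n : ℝ) ^ (-β) := by
        refine Summable.le_tsum hs 1 (fun j hj => ?_)
        rcases Nat.eq_zero_or_pos j with rfl | hj1
        · simp [Real.zero_rpow (by linarith : -β ≠ 0)]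
        · exact mul_nonneg (hc j hj1) (Real.rpow_nonneg (Nat.cast_nonneg j) _)

lemma dirichlet_aux_le (c : ℕ → ℝ) (hc : ∀ n : ℕ, 1 ≤ n → 0 ≤ c n)
    (β : ℝ) (hβ : 2 ≤ β)
    (hs : Summable fun n : ℕ => c n * (n : ℝ) ^ (-β))
    (hs2 : Summable fun n : ℕ => c n * (n : ℝ) ^ (-(2:ℝ))) :
    (∑' n : ℕ, c n * (n : ℝ) ^ (-β)) ≤ ∑' n : ℕ, c n * (n : ℝ) ^ (-(2:ℝ)) := by
  refine Summable.tsum_le_tsum (fun n => ?_) hs hs2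
  rcases Nat.eq_zero_or_pos n with rfl | hn1
  · simp [Real.zero_rpow (by linarith : -β ≠ 0), Real.zero_rpow (by norm_num : -(2:ℝ) ≠ 0)]
  · have hn : (1 : ℝ) ≤ (n : ℝ) := by exact_mod_cast hn1
    exact mul_le_mul_of_nonneg_left
      (Real.rpow_le_rpow_of_exponent_le hn (by linarith)) (hc n hn1)

/-- If two Dirichlet series with nonnegative coefficients, both with first
coefficient `1`, satisfy `∑ b(n) n^{-β} = λ^{-β} ∑ a(n) n^{-β}` for all real
`β > 1`, then `λ = 1`. -/
theorem dirichlet_series_rescaling_trivial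
    (a b : ℕ → ℝ) (ha : ∀ n : ℕ, 1 ≤ n → 0 ≤ a n) (hb : ∀ n : ℕ, 1 ≤ n → 0 ≤ b n)
    (ha1 : a 1 = 1) (hb1 : b 1 = 1) (lam : ℝ) (hlam : 0 < lam)
    (hasum : ∀ β : ℝ, 1 < β → Summable fun n : ℕ => a n * (n : ℝ) ^ (-β))
    (hbsum : ∀ β : ℝ, 1 < β → Summable fun n : ℕ => b n * (n : ℝ) ^ (-β))
    (heq : ∀ β : ℝ, 1 < β →
      (∑' n : ℕ, b n * (n : ℝ) ^ (-β)) = lam ^ (-β) * ∑' n : ℕ, a n * (n : ℝ) ^ (-β)) :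
    lam = 1 := by
  rcases lt_trichotomy lam 1 with hl | hl | hl
  · -- lam < 1 : lam^{-β} is unbounded, contradiction
    exfalso
    set D := ∑' n : ℕ, b n * (n : ℝ) ^ (-(2:ℝ)) with hD
    have hD1 : 1 ≤ D := dirichlet_aux_ge_one b hb hb1 2 one_lt_two (hbsum 2 one_lt_two)
    have hDpos : (0:ℝ) < D := lt_of_lt_of_le one_pos hD1
    have hinv : 1 < lam⁻¹ := (one_lt_inv₀ hlam).mpr hl
    set β := max 2 (Real.logb lam⁻¹ D + 1) with hβdef
    have hβ2 : (2:ℝ) ≤ β := le_max_left _ _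
    have hβ1 : (1:ℝ) < β := lt_of_lt_of_le one_lt_two hβ2
    have hlogb : lam⁻¹ ^ Real.logb lam⁻¹ D = D :=
      Real.rpow_logb (by positivity) (ne_of_gt hinv) hDpos
    have hlt : D < lam⁻¹ ^ β := by
      have h1 : Real.logb lam⁻¹ D < β := by
        have := le_max_right (2:ℝ) (Real.logb lam⁻¹ D + 1); linarith
      calc D = lam⁻¹ ^ Real.logb lam⁻¹ D := hlogb.symm
        _ < lam⁻¹ ^ β := Real.rpow_lt_rpow_of_exponent_lt hinv h1
    have hlamβ : lam ^ (-β) = lam⁻¹ ^ β := by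
      rw [Real.rpow_neg hlam.le, ← Real.inv_rpow hlam.le]
    have hSa : 1 ≤ ∑' n : ℕ, a n * (n:ℝ) ^ (-β) :=
      dirichlet_aux_ge_one a ha ha1 β hβ1 (hasum β hβ1)
    have hSb : (∑' n : ℕ, b n * (n:ℝ) ^ (-β)) ≤ D :=
      dirichlet_aux_le b hb β hβ2 (hbsum β hβ1) (hbsum 2 one_lt_two)
    have hpos : 0 ≤ lam ^ (-β) := Real.rpow_nonneg hlam.le _
    have h1 : lam ^ (-β) ≤ lam ^ (-β) * ∑' n : ℕ, a n * (n:ℝ) ^ (-β) :=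
      le_mul_of_one_le_right hpos hSa
    rw [← heq β hβ1] at h1
    have h2 : lam ^ (-β) ≤ D := h1.trans hSb
    rw [hlamβ] at h2
    exact absurd h2 (not_le.mpr hlt)
  · exact hl
  · -- lam > 1 : lam^{-β} → 0, contradiction
    exfalso
    set C := ∑' n : ℕ, a n * (n : ℝ) ^ (-(2:ℝ)) with hC
    have hC1 : 1 ≤ C := dirichlet_aux_ge_one a ha ha1 2 one_lt_two (hasum 2 one_lt_two)
    have hCpos : (0:ℝ) < C := lt_of_lt_of_le one_pos hC1
    set β := max 2 (Real.logb lam C + 1) with hβdef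
    have hβ2 : (2:ℝ) ≤ β := le_max_left _ _
    have hβ1 : (1:ℝ) < β := lt_of_lt_of_le one_lt_two hβ2
    have hlogb : lam ^ Real.logb lam C = C := Real.rpow_logb hlam (ne_of_gt hl) hCpos
    have hlt : C < lam ^ β := by
      have h1 : Real.logb lam C < β := by
        have := le_max_right (2:ℝ) (Real.logb lam C + 1); linarith
      calc C = lam ^ Real.logb lam C := hlogb.symm
        _ < lam ^ β := Real.rpow_lt_rpow_of_exponent_lt hl h1
    have hSb : 1 ≤ ∑' n : ℕ, b n * (n:ℝ) ^ (-β) :=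
      dirichlet_aux_ge_one b hb hb1 β hβ1 (hbsum β hβ1)
    have hSa : (∑' n : ℕ, a n * (n:ℝ) ^ (-β)) ≤ C :=
      dirichlet_aux_le a ha β hβ2 (hasum β hβ1) (hasum 2 one_lt_two)
    have hpos : 0 ≤ lam ^ (-β) := Real.rpow_nonneg hlam.le _
    have key : 1 ≤ lam ^ (-β) * C := by
      calc (1:ℝ) ≤ ∑' n : ℕ, b n * (n:ℝ) ^ (-β) := hSb
        _ = lam ^ (-β) * ∑' n : ℕ, a n * (n:ℝ) ^ (-β) := heq β hβ1
        _ ≤ lam ^ (-β) * C := mul_le_mul_of_nonneg_left hSa hpos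
    rw [Real.rpow_neg hlam.le] at key
    have hpow : 0 < lam ^ β := Real.rpow_pos_of_pos hlam β
    have hmul : (lam ^ β)⁻¹ * lam ^ β = 1 := inv_mul_cancel₀ (ne_of_gt hpow)
    nlinarith [inv_pos.mpr hpow]
end

section
/- Let K and L be arithmetically equivalent number fields. Then for every natural number q, the number of prime ideals of 𝓞_K of absolute norm q equals the number of prime ideals of 𝓞_L of absolute norm q. In particular, for every rational prime p there is a bijection between the primes of K above p and the primes of L above p preserving the inertia degree. -/
open NumberField

/-- Two number fields are arithmetically equivalent if for every natural number `n`
they have the same (finite) number of nonzero ideals of absolute norm `n`;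
this is equivalent to equality of their Dedekind zeta functions. -/
def ArithmeticallyEquivalent (K L : Type*) [Field K] [NumberField K]
    [Field L] [NumberField L] : Prop :=
  ∀ n : ℕ, Nat.card {I : Ideal (𝓞 K) // I ≠ ⊥ ∧ Ideal.absNorm I = n} =
    Nat.card {I : Ideal (𝓞 L) // I ≠ ⊥ ∧ Ideal.absNorm I = n}

/-!
Strong induction on `q`. A nonzero ideal of norm `q` that is not prime is a product of primes of
norm `< q`, and unique factorisation makes it the same as a multiset of such primes with norms
multiplying to `q`. So by induction a norm-preserving bijection between the primes of norm `< q`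
of the two rings matches their non-prime ideals of norm `q`; as the total numbers of ideals of
norm `q` agree, so do the numbers of primes of norm `q`. The primes above `p` are those whose
norm is divisible by `p`, so counting fibres of the norm gives the bijection of the second part.
-/

open Ideal UniqueFactorizationMonoid

section

variable {R : Type*} [CommRing R] [IsDedekindDomain R] [Module.Free ℤ R] [Module.Finite ℤ R]

theorem Ideal.finite_absNorm_eq (n : ℕ) : {I : Ideal R | absNorm I = n}.Finite := by
  have : IsAddTorsionFree R := .of_isTorsionFree ℤ _
  have := CharZero.of_isAddTorsionFree R R
  exact finite_setOfPred_absNorm_eq n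

theorem Ideal.absNorm_lt_of_mem_normalizedFactors {I P : Ideal R} (hI : I ≠ ⊥)
    (hIP : ¬ I.IsPrime) (hP : P ∈ normalizedFactors I) : absNorm P < absNorm I := by
  obtain ⟨J, rfl⟩ := dvd_of_mem_normalizedFactors hP
  have hJ : J ≠ ⊤ := by
    rintro rfl
    exact hIP (by simpa using isPrime_of_prime (prime_of_normalized_factor P hP))
  have hPJ : absNorm P * absNorm J ≠ 0 := by rwa [← map_mul, Ne, absNorm_eq_zero_iff]
  rw [map_mul]
  have hJ1 : 1 < absNorm J :=
    Nat.one_lt_iff_ne_zero_and_ne_one.mpr ⟨right_ne_zero_of_mul hPJ, mt absNorm_eq_one_iff.mp hJ⟩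
  exact lt_mul_of_one_lt_right (Nat.pos_of_ne_zero (left_ne_zero_of_mul hPJ)) hJ1

theorem Ideal.natCast_mem_iff_dvd_absNorm {p : ℕ} (hp : p.Prime) {P : Ideal R} (hP0 : P ≠ ⊥)
    [hP : P.IsPrime] : (p : R) ∈ P ↔ p ∣ absNorm P := by
  have := hP.isMaximal hP0
  obtain ⟨p', n, -, hp'P, hp', hnorm⟩ := exists_prime_and_absNorm_eq_pow P
  constructor
  · intro hpP
    have hdvd : absNorm P ∣ p ^ Module.finrank ℤ R := by
      rw [← absNorm_span_natCast]
      exact absNorm_dvd_absNorm_of_le ((span_singleton_le_iff_mem _).mpr hpP)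
    obtain ⟨k, -, hk⟩ := (Nat.dvd_prime_pow hp).mp hdvd
    have hk0 : k ≠ 0 := by
      rintro rfl
      exact hP.ne_top (absNorm_eq_one_iff.mp (by simpa using hk))
    exact hk ▸ dvd_pow_self p hk0
  · intro hdvd
    rw [hnorm] at hdvd
    rwa [(Nat.prime_dvd_prime_iff_eq hp hp').mp (hp.dvd_of_dvd_pow hdvd)]

end

section

variable {R : Type*} [CommRing R] [IsDedekindDomain R] [Module.Free ℤ R]

variable (R) in
abbrev PrimesWithNorm (Φ : ℕ → Prop) : Type _ :=
  {P : Ideal R // P ≠ ⊥ ∧ P.IsPrime ∧ Φ (absNorm P)}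

namespace PrimesWithNorm

variable {Φ : ℕ → Prop}

noncomputable def prod (m : Multiset (PrimesWithNorm R Φ)) : Ideal R :=
  (m.map Subtype.val).prod

noncomputable def normProd (m : Multiset (PrimesWithNorm R Φ)) : ℕ :=
  (m.map fun P => absNorm P.1).prod

theorem absNorm_prod (m : Multiset (PrimesWithNorm R Φ)) : absNorm (prod m) = normProd m := by
  rw [prod, normProd, map_multiset_prod, Multiset.map_map]
  rfl

theorem prod_ne_bot (m : Multiset (PrimesWithNorm R Φ)) : prod m ≠ ⊥ :=
  Multiset.prod_ne_zero fun h => by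
    obtain ⟨P, -, hP⟩ := Multiset.mem_map.mp h
    exact P.2.1 hP

theorem normalizedFactors_prod (m : Multiset (PrimesWithNorm R Φ)) :
    normalizedFactors (prod m) = m.map Subtype.val := by
  refine normalizedFactors_prod_of_prime fun P hP => ?_
  obtain ⟨⟨P, hP0, hP, -⟩, -, rfl⟩ := Multiset.mem_map.mp hP
  exact (prime_iff_isPrime hP0).mpr hP

theorem prod_injective : Function.Injective (prod : Multiset (PrimesWithNorm R Φ) → Ideal R) := fun m m' h =>
  Multiset.map_injective Subtype.val_injective <| by
    rw [← normalizedFactors_prod, h, normalizedFactors_prod]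

theorem exists_prod_eq {I : Ideal R} (hI : I ≠ ⊥)
    (hΦ : ∀ P ∈ normalizedFactors I, Φ (absNorm P)) :
    ∃ m : Multiset (PrimesWithNorm R Φ), prod m = I := by
  have h (P) (hP : P ∈ normalizedFactors I) : P ≠ ⊥ ∧ P.IsPrime ∧ Φ (absNorm P) :=
    ⟨(prime_of_normalized_factor P hP).ne_zero,
      isPrime_of_prime (prime_of_normalized_factor P hP), hΦ P hP⟩
  lift normalizedFactors I to Multiset (PrimesWithNorm R Φ) using h with m hm
  exact ⟨m, by rw [prod, hm, Ideal.prod_normalizedFactors_eq_self hI]⟩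

theorem not_isPrime_prod {q : ℕ} {m : Multiset (PrimesWithNorm R (· < q))}
    (hm : normProd m = q) : ¬ (prod m).IsPrime := by
  intro h
  have hsingle : m.map Subtype.val = {prod m} := by
    rw [← normalizedFactors_prod m, normalizedFactors_irreducible
      ((prime_iff_isPrime (prod_ne_bot m)).mpr h).irreducible, normalize_eq]
  obtain ⟨P, -, hP⟩ := Multiset.mem_map.mp (hsingle ▸ Multiset.mem_singleton_self (prod m))
  have hlt := P.2.2.2
  rw [hP, absNorm_prod, hm] at hlt
  exact hlt.false

theorem normProd_map {S : Type*} [CommRing S] [IsDedekindDomain S] [Module.Free ℤ S]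
    {Ψ : ℕ → Prop} {f : PrimesWithNorm R Φ → PrimesWithNorm S Ψ}
    (hf : ∀ P, absNorm (f P).1 = absNorm P.1) (m : Multiset (PrimesWithNorm R Φ)) :
    normProd (m.map f) = normProd m := by
  simp only [normProd, Multiset.map_map, Function.comp_def, hf]

def normProdEquiv {S : Type*} [CommRing S] [IsDedekindDomain S] [Module.Free ℤ S]
    {Ψ : ℕ → Prop} (e : PrimesWithNorm R Φ ≃ PrimesWithNorm S Ψ)
    (he : ∀ P, absNorm (e P).1 = absNorm P.1) (q : ℕ) :
    {m : Multiset (PrimesWithNorm R Φ) // normProd m = q} ≃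
      {m : Multiset (PrimesWithNorm S Ψ) // normProd m = q} where
  toFun m := ⟨m.1.map e, (normProd_map he m.1).trans m.2⟩
  invFun m := ⟨m.1.map e.symm,
    (normProd_map (fun Q => by rw [← he, e.apply_symm_apply]) m.1).trans m.2⟩
  left_inv m := by simp
  right_inv m := by simp

def fiberEquiv {n : ℕ} (hn : Φ n) :
    {P : PrimesWithNorm R Φ // absNorm P.1 = n} ≃ PrimesWithNorm R (· = n) :=
  (Equiv.subtypeSubtypeEquivSubtypeInter (fun P : Ideal R => P ≠ ⊥ ∧ P.IsPrime ∧ Φ (absNorm P))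
    (absNorm · = n)).trans <| Equiv.subtypeEquivRight fun _ => by
    constructor
    · exact fun ⟨⟨hP0, hP, _⟩, hPn⟩ => ⟨hP0, hP, hPn⟩
    · rintro ⟨hP0, hP, rfl⟩
      exact ⟨⟨hP0, hP, hn⟩, rfl⟩

theorem isEmpty_fiber {n : ℕ} (hn : ¬ Φ n) :
    IsEmpty {P : PrimesWithNorm R Φ // absNorm P.1 = n} :=
  ⟨fun P => hn (P.2 ▸ P.1.2.2.2)⟩

end PrimesWithNorm

variable [Module.Finite ℤ R]

theorem PrimesWithNorm.finite_eq (n : ℕ) : Finite (PrimesWithNorm R (· = n)) :=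
  ((finite_absNorm_eq n).subset fun _ hP => hP.2.2).to_subtype

open PrimesWithNorm

theorem Ideal.card_absNorm_eq_eq_add_card_not_isPrime (q : ℕ) :
    Nat.card {I : Ideal R // I ≠ ⊥ ∧ absNorm I = q} = Nat.card (PrimesWithNorm R (· = q)) +
      Nat.card {I : Ideal R // I ≠ ⊥ ∧ absNorm I = q ∧ ¬ I.IsPrime} := by
  refine (Set.ncard_inter_add_ncard_sdiff_eq_ncard {I : Ideal R | I ≠ ⊥ ∧ absNorm I = q}
    {I | I.IsPrime} ((finite_absNorm_eq q).subset fun I hI => hI.2)).symm.trans ?_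
  congr 1 <;> exact Nat.card_congr (Equiv.subtypeEquivRight fun I => by
    simp only [Set.mem_inter_iff, Set.mem_sdiff, Set.mem_ofPred_eq]; tauto)

noncomputable def PrimesWithNorm.compositesEquiv (q : ℕ) :
    {m : Multiset (PrimesWithNorm R (· < q)) // normProd m = q} ≃
      {I : Ideal R // I ≠ ⊥ ∧ absNorm I = q ∧ ¬ I.IsPrime} :=
  Equiv.ofBijective (fun m => ⟨prod m.1, prod_ne_bot _, (absNorm_prod _).trans m.2,
      not_isPrime_prod m.2⟩)
    ⟨fun m m' h => Subtype.ext (prod_injective (congrArg Subtype.val h)), fun I => by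
      obtain ⟨m, hm⟩ := exists_prod_eq (Φ := (· < q)) I.2.1 fun P hP =>
        I.2.2.1 ▸ absNorm_lt_of_mem_normalizedFactors I.2.1 I.2.2.2 hP
      exact ⟨⟨m, by rw [← absNorm_prod, hm, I.2.2.1]⟩, Subtype.ext hm⟩⟩

def PrimesWithNorm.primesOverEquiv {p : ℕ} (hp : p.Prime) :
    {P : Ideal R // P ≠ ⊥ ∧ P.IsPrime ∧ (p : R) ∈ P} ≃ PrimesWithNorm R (p ∣ ·) :=
  Equiv.subtypeEquivRight fun _ => and_congr_right fun hP0 => and_congr_right fun _ =>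
    natCast_mem_iff_dvd_absNorm hp hP0

variable {S : Type*} [CommRing S] [IsDedekindDomain S] [Module.Free ℤ S] [Module.Finite ℤ S]

theorem PrimesWithNorm.exists_equiv_of_card_eq {Φ : ℕ → Prop}
    (h : ∀ n, Φ n → Nat.card (PrimesWithNorm R (· = n)) = Nat.card (PrimesWithNorm S (· = n))) :
    ∃ e : PrimesWithNorm R Φ ≃ PrimesWithNorm S Φ, ∀ P, absNorm (e P).1 = absNorm P.1 := by
  have fiber (n : ℕ) : Nonempty ({P : PrimesWithNorm R Φ // absNorm P.1 = n} ≃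
      {Q : PrimesWithNorm S Φ // absNorm Q.1 = n}) := by
    by_cases hn : Φ n
    · have := finite_eq (R := R) n
      have := finite_eq (R := S) n
      obtain ⟨e⟩ := Finite.card_eq.mp (h n hn)
      exact ⟨(fiberEquiv hn).trans (e.trans (fiberEquiv hn).symm)⟩
    · have := isEmpty_fiber (R := R) hn
      have := isEmpty_fiber (R := S) hn
      exact ⟨Equiv.equivOfIsEmpty _ _⟩
  let e (n : ℕ) := (fiber n).some
  exact ⟨Equiv.ofFiberEquiv e, Equiv.ofFiberEquiv_map e⟩

theorem PrimesWithNorm.card_eq_of_card_absNorm_eq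
    (h : ∀ n, Nat.card {I : Ideal R // I ≠ ⊥ ∧ absNorm I = n} =
      Nat.card {I : Ideal S // I ≠ ⊥ ∧ absNorm I = n}) (q : ℕ) :
    Nat.card (PrimesWithNorm R (· = q)) = Nat.card (PrimesWithNorm S (· = q)) := by
  induction q using Nat.strong_induction_on with
  | _ q ih =>
  obtain ⟨e, he⟩ := exists_equiv_of_card_eq (Φ := (· < q)) ih
  have hcomposites : Nat.card {I : Ideal R // I ≠ ⊥ ∧ absNorm I = q ∧ ¬ I.IsPrime} =
      Nat.card {I : Ideal S // I ≠ ⊥ ∧ absNorm I = q ∧ ¬ I.IsPrime} :=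
    Nat.card_congr <| (compositesEquiv q).symm.trans <|
      (normProdEquiv e he q).trans (compositesEquiv q)
  have := h q
  rw [card_absNorm_eq_eq_add_card_not_isPrime, card_absNorm_eq_eq_add_card_not_isPrime,
    hcomposites] at this
  omega

theorem PrimesWithNorm.exists_equiv_primesOver
    (h : ∀ q, Nat.card (PrimesWithNorm R (· = q)) = Nat.card (PrimesWithNorm S (· = q)))
    {p : ℕ} (hp : p.Prime) :
    ∃ e : {P : Ideal R // P ≠ ⊥ ∧ P.IsPrime ∧ (p : R) ∈ P} ≃
      {Q : Ideal S // Q ≠ ⊥ ∧ Q.IsPrime ∧ (p : S) ∈ Q}, ∀ P, absNorm (e P).1 = absNorm P.1 := by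
  obtain ⟨e, he⟩ := exists_equiv_of_card_eq (Φ := (p ∣ ·)) fun n _ => h n
  exact ⟨(primesOverEquiv hp).trans (e.trans (primesOverEquiv hp).symm), fun P => he _⟩

end

/-- Arithmetically equivalent number fields have, for every `q : ℕ`, the same number
of nonzero prime ideals of absolute norm `q`; in particular, for every rational
prime `p` there is a bijection between the primes above `p` in the two fields
preserving the inertia degree (equivalently, the absolute norm). -/
theorem primes_count_eq_of_arithmeticallyEquivalent
    (K L : Type*) [Field K] [NumberField K] [Field L] [NumberField L]
    (h : ArithmeticallyEquivalent K L) :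
    (∀ q : ℕ, Nat.card {P : Ideal (𝓞 K) // P ≠ ⊥ ∧ P.IsPrime ∧ Ideal.absNorm P = q} =
      Nat.card {Q : Ideal (𝓞 L) // Q ≠ ⊥ ∧ Q.IsPrime ∧ Ideal.absNorm Q = q}) ∧
    ∀ p : ℕ, p.Prime →
      ∃ e : {P : Ideal (𝓞 K) // P ≠ ⊥ ∧ P.IsPrime ∧ (p : 𝓞 K) ∈ P} ≃
        {Q : Ideal (𝓞 L) // Q ≠ ⊥ ∧ Q.IsPrime ∧ (p : 𝓞 L) ∈ Q},
        ∀ P, Ideal.absNorm ((e P) : Ideal (𝓞 L)) = Ideal.absNorm (P : Ideal (𝓞 K)) := by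
  have hprimes := PrimesWithNorm.card_eq_of_card_absNorm_eq h
  exact ⟨hprimes, fun p hp => PrimesWithNorm.exists_equiv_primesOver hprimes hp⟩
end

section
/- Let G be a finite group and let H₁ and H₂ be subgroups of G that are Gaßmann equivalent in G, i.e. for every g ∈ G the number of elements of H₁ that are conjugate in G to g equals the number of elements of H₂ that are conjugate in G to g. Let N be a normal subgroup of G. Then H₁ ∩ N and H₂ ∩ N are Gaßmann equivalent in G: for every g ∈ G, the number of elements of H₁ ∩ N conjugate in G to g equals the number of elements of H₂ ∩ N conjugate in G to g. -/
lemma gassmann_aux {G : Type*} [Group G] (H N : Subgroup G) (hN : N.Normal)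
    (g : G) (hg : g ∈ N) :
    Nat.card {x : (H ⊓ N : Subgroup G) // IsConj g (x : G)} =
      Nat.card {x : H // IsConj g (x : G)} := by
  apply Nat.card_eq_of_bijective (fun x => ⟨⟨(x.1 : G), x.1.2.1⟩, x.2⟩)
  constructor
  · rintro ⟨⟨x, hx⟩, hcx⟩ ⟨⟨y, hy⟩, hcy⟩ hxy
    simp only [Subtype.mk.injEq] at hxy ⊢
    exact hxy
  · rintro ⟨⟨x, hx⟩, hcx⟩
    obtain ⟨c, hc⟩ := id hcx
    have hc' : (c : G) * g * (c : G)⁻¹ = x := by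
      have h1 : (c : G) * g = x * c := hc.eq
      rw [h1]; group
    have hxN : x ∈ N := by
      have := hN.conj_mem g hg c
      rwa [hc'] at this
    exact ⟨⟨⟨x, hx, hxN⟩, hcx⟩, rfl⟩

/-- Gaßmann equivalence of subgroups is stable under intersection with a normal
subgroup: if `H₁` and `H₂` meet every conjugacy class of the finite group `G`
in the same number of elements, then so do `H₁ ⊓ N` and `H₂ ⊓ N` for any
normal subgroup `N` of `G`. -/
theorem gassmann_equivalent_inf_normal
    {G : Type*} [Group G] [Finite G] (H₁ H₂ : Subgroup G)
    (h : ∀ g : G, Nat.card {x : H₁ // IsConj g (x : G)} =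
      Nat.card {x : H₂ // IsConj g (x : G)})
    (N : Subgroup G) (hN : N.Normal) :
    ∀ g : G, Nat.card {x : (H₁ ⊓ N : Subgroup G) // IsConj g (x : G)} =
      Nat.card {x : (H₂ ⊓ N : Subgroup G) // IsConj g (x : G)} := by
  intro g
  by_cases hg : g ∈ N
  · rw [gassmann_aux H₁ N hN g hg, gassmann_aux H₂ N hN g hg, h g]
  · have empty : ∀ H : Subgroup G,
        IsEmpty {x : (H ⊓ N : Subgroup G) // IsConj g (x : G)} := by
      intro H
      constructor
      rintro ⟨⟨x, hx⟩, c, hc⟩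
      apply hg
      have hc' : (c : G)⁻¹ * x * (c : G)⁻¹⁻¹ = g := by
        have h1 : (c : G) * g = x * c := hc.eq
        have : g = (c : G)⁻¹ * (x * c) := by rw [← h1]; group
        rw [this]; group
      have := hN.conj_mem x hx.2 (c : G)⁻¹
      rwa [hc'] at this
    haveI := empty H₁
    haveI := empty H₂
    rw [Nat.card_of_isEmpty, Nat.card_of_isEmpty]
end
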